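/- For 0 ≤ j ≤ n set H_j = σ_j P σ_j⁻¹ ∩ P. Then: (1) H_0 = P; (2) for 1 ≤ j ≤ n−1, H_j = {[[g, X], [0, ᵗg⁻¹]] ∈ P : the upper-right j×(n−j) block of g is 0 and the upper-left j×j block of X is 0}; (3) H_n = M. -/

import Mathlib

open Matrix

variable (F : Type*) [Field F]

/-- The Siegel parabolic subgroup `P` of `Sp_{2n}(F)`, as a set of matrices. -/
def SiegelP (n : ℕ) : Set (Matrix (Fin n ⊕ Fin n) (Fin n ⊕ Fin n) F) :=
  {m | ∃ g X : Matrix (Fin n) (Fin n) F,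
    IsUnit g ∧ (g⁻¹ * X)ᵀ = g⁻¹ * X ∧ m = Matrix.fromBlocks g X 0 (g⁻¹)ᵀ}

/-- The Levi subgroup `M` of the Siegel parabolic, as a set of matrices. -/
def Mlevi (n : ℕ) : Set (Matrix (Fin n ⊕ Fin n) (Fin n ⊕ Fin n) F) :=
  {m | ∃ g : Matrix (Fin n) (Fin n) F, IsUnit g ∧ m = Matrix.fromBlocks g 0 0 (g⁻¹)ᵀ}

/-- The Weyl elements `σ_j`, `j = 0, …, n`, with block sizes `(j, n-j, j, n-j)`:
nonzero blocks `(1,3) = -I_j`, `(2,2) = I_{n-j}`, `(3,1) = I_j`, `(4,4) = I_{n-j}`. -/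
def sigmaM (n j : ℕ) : Matrix (Fin n ⊕ Fin n) (Fin n ⊕ Fin n) F :=
  Matrix.fromBlocks
    (Matrix.diagonal fun i : Fin n => if j ≤ (i : ℕ) then 1 else 0)
    (Matrix.diagonal fun i : Fin n => if (i : ℕ) < j then -1 else 0)
    (Matrix.diagonal fun i : Fin n => if (i : ℕ) < j then 1 else 0)
    (Matrix.diagonal fun i : Fin n => if j ≤ (i : ℕ) then 1 else 0)

/-- `H_j = σ_j P σ_j⁻¹ ∩ P`. -/
def Hset (n j : ℕ) : Set (Matrix (Fin n ⊕ Fin n) (Fin n ⊕ Fin n) F) :=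
  {m | ∃ p ∈ SiegelP F n, m = sigmaM F n j * p * (sigmaM F n j)⁻¹} ∩ SiegelP F n

section Aux

variable {F}

/-- diag with 1's in positions `≥ j`. -/
def dd1 (n j : ℕ) : Matrix (Fin n) (Fin n) F :=
  Matrix.diagonal fun i => if j ≤ (i : ℕ) then 1 else 0

/-- diag with 1's in positions `< j`. -/
def dd3 (n j : ℕ) : Matrix (Fin n) (Fin n) F :=
  Matrix.diagonal fun i => if (i : ℕ) < j then 1 else 0

variable {n j : ℕ}

lemma dd1_mul_dd1 : (dd1 n j : Matrix (Fin n) (Fin n) F) * dd1 n j = dd1 n j := by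
  simp only [dd1, diagonal_mul_diagonal]
  exact congrArg Matrix.diagonal (funext fun i => by split <;> simp)

lemma dd3_mul_dd3 : (dd3 n j : Matrix (Fin n) (Fin n) F) * dd3 n j = dd3 n j := by
  simp only [dd3, diagonal_mul_diagonal]
  exact congrArg Matrix.diagonal (funext fun i => by split <;> simp)

lemma dd1_mul_dd3 : (dd1 n j : Matrix (Fin n) (Fin n) F) * dd3 n j = 0 := by
  simp only [dd1, dd3, diagonal_mul_diagonal]
  rw [← diagonal_zero]
  refine congrArg Matrix.diagonal (funext fun i => ?_)
  rcases lt_or_ge (i : ℕ) j with h | h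
  · simp [h, not_le.mpr h]
  · simp [h, not_lt.mpr h]

lemma dd3_mul_dd1 : (dd3 n j : Matrix (Fin n) (Fin n) F) * dd1 n j = 0 := by
  simp only [dd1, dd3, diagonal_mul_diagonal]
  rw [← diagonal_zero]
  refine congrArg Matrix.diagonal (funext fun i => ?_)
  rcases lt_or_ge (i : ℕ) j with h | h
  · simp [h, not_le.mpr h]
  · simp [h, not_lt.mpr h]

lemma dd1_add_dd3 : (dd1 n j : Matrix (Fin n) (Fin n) F) + dd3 n j = 1 := by
  simp only [dd1, dd3, diagonal_add]
  rw [← diagonal_one]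
  refine congrArg Matrix.diagonal (funext fun i => ?_)
  rcases lt_or_ge (i : ℕ) j with h | h
  · simp [h, not_le.mpr h]
  · simp [h, not_lt.mpr h]

lemma dd3_add_dd1 : (dd3 n j : Matrix (Fin n) (Fin n) F) + dd1 n j = 1 := by
  rw [add_comm]; exact dd1_add_dd3

lemma sigma_eq : sigmaM F n j = Matrix.fromBlocks (dd1 n j) (-dd3 n j) (dd3 n j) (dd1 n j) := by
  unfold sigmaM dd1 dd3
  have h : (fun i : Fin n => if (i : ℕ) < j then (-1 : F) else 0)
      = fun i : Fin n => -(if (i : ℕ) < j then (1 : F) else 0) := funext fun i => by split <;> simp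
  rw [h, diagonal_neg]

lemma sigma_transpose :
    (sigmaM F n j)ᵀ = Matrix.fromBlocks (dd1 n j) (dd3 n j) (-dd3 n j) (dd1 n j) := by
  rw [sigma_eq, fromBlocks_transpose]
  simp [dd1, dd3]

lemma fromBlocks_congr {A B C D A' B' C' D' : Matrix (Fin n) (Fin n) F}
    (h1 : A = A') (h2 : B = B') (h3 : C = C') (h4 : D = D') :
    Matrix.fromBlocks A B C D = Matrix.fromBlocks A' B' C' D' := by
  rw [h1, h2, h3, h4]

lemma sigma_mul_transpose : sigmaM F n j * (sigmaM F n j)ᵀ = 1 := by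
  rw [sigma_transpose, sigma_eq, fromBlocks_multiply, ← fromBlocks_one]
  apply fromBlocks_congr <;>
    simp [neg_mul, mul_neg, neg_neg, ← neg_add, dd1_mul_dd1, dd3_mul_dd3, dd1_mul_dd3, dd3_mul_dd1,
      dd1_add_dd3, dd3_add_dd1]

lemma transpose_mul_sigma : (sigmaM F n j)ᵀ * sigmaM F n j = 1 := by
  rw [sigma_transpose, sigma_eq, fromBlocks_multiply, ← fromBlocks_one]
  apply fromBlocks_congr <;>
    simp [neg_mul, mul_neg, neg_neg, ← neg_add, dd1_mul_dd1, dd3_mul_dd3, dd1_mul_dd3, dd3_mul_dd1,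
      dd1_add_dd3, dd3_add_dd1]

lemma sigma_inv : (sigmaM F n j)⁻¹ = (sigmaM F n j)ᵀ :=
  Matrix.inv_eq_right_inv sigma_mul_transpose

/-- The symplectic form matrix. -/
def Jmat (F : Type*) [Field F] (n : ℕ) : Matrix (Fin n ⊕ Fin n) (Fin n ⊕ Fin n) F :=
  Matrix.fromBlocks 0 1 (-1) 0

lemma sigma_J : sigmaM F n j * Jmat F n * (sigmaM F n j)ᵀ = Jmat F n := by
  rw [sigma_transpose, sigma_eq, Jmat, fromBlocks_multiply, fromBlocks_multiply]
  apply fromBlocks_congr <;>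
    simp [neg_mul, mul_neg, neg_neg, ← neg_add, dd1_mul_dd1, dd3_mul_dd3, dd1_mul_dd3, dd3_mul_dd1,
      dd1_add_dd3, dd3_add_dd1]

lemma sigmaT_J : (sigmaM F n j)ᵀ * Jmat F n * sigmaM F n j = Jmat F n := by
  rw [sigma_transpose, sigma_eq, Jmat, fromBlocks_multiply, fromBlocks_multiply]
  apply fromBlocks_congr <;>
    simp [neg_mul, mul_neg, neg_neg, ← neg_add, dd1_mul_dd1, dd3_mul_dd3, dd1_mul_dd3, dd3_mul_dd1,
      dd1_add_dd3, dd3_add_dd1]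
lemma conj_sigma (g X h : Matrix (Fin n) (Fin n) F) :
    sigmaM F n j * Matrix.fromBlocks g X 0 h * (sigmaM F n j)ᵀ =
    Matrix.fromBlocks
      (dd1 n j * g * dd1 n j - dd1 n j * X * dd3 n j + dd3 n j * h * dd3 n j)
      (dd1 n j * g * dd3 n j + dd1 n j * X * dd1 n j - dd3 n j * h * dd1 n j)
      (dd3 n j * g * dd1 n j - dd3 n j * X * dd3 n j - dd1 n j * h * dd3 n j)
      (dd3 n j * g * dd3 n j + dd3 n j * X * dd1 n j + dd1 n j * h * dd1 n j) := by
  rw [sigma_transpose, sigma_eq, fromBlocks_multiply, fromBlocks_multiply]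
  apply fromBlocks_congr <;> noncomm_ring

lemma conj_sigmaT (g X h : Matrix (Fin n) (Fin n) F) :
    (sigmaM F n j)ᵀ * Matrix.fromBlocks g X 0 h * sigmaM F n j =
    Matrix.fromBlocks
      (dd1 n j * g * dd1 n j + dd1 n j * X * dd3 n j + dd3 n j * h * dd3 n j)
      (-(dd1 n j * g * dd3 n j) + dd1 n j * X * dd1 n j + dd3 n j * h * dd1 n j)
      (-(dd3 n j * g * dd1 n j) - dd3 n j * X * dd3 n j + dd1 n j * h * dd3 n j)
      (dd3 n j * g * dd3 n j - dd3 n j * X * dd1 n j + dd1 n j * h * dd1 n j) := by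
  rw [sigma_transpose, sigma_eq, fromBlocks_multiply, fromBlocks_multiply]
  apply fromBlocks_congr <;> noncomm_ring

lemma siegel_symp {n : ℕ} {s : Matrix (Fin n ⊕ Fin n) (Fin n ⊕ Fin n) F}
    (hs : s ∈ SiegelP F n) : sᵀ * Jmat F n * s = Jmat F n := by
  obtain ⟨g, X, hg, hsym, rfl⟩ := hs
  have hgd : IsUnit g.det := (Matrix.isUnit_iff_isUnit_det g).mp hg
  have h1 : g⁻¹ * g = 1 := Matrix.nonsing_inv_mul g hgd
  rw [Jmat, fromBlocks_transpose, fromBlocks_multiply, fromBlocks_multiply]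
  apply fromBlocks_congr
  · simp
  · simp only [transpose_zero, mul_zero, zero_mul, mul_one, one_mul, mul_neg, neg_mul,
      add_zero, zero_add, transpose_transpose]
    rw [← transpose_mul, h1, transpose_one]
    simp
  · simp only [transpose_zero, mul_zero, zero_mul, mul_one, one_mul, mul_neg, neg_mul,
      add_zero, zero_add, transpose_transpose]
    rw [h1]
  · simp only [transpose_zero, mul_zero, zero_mul, mul_one, one_mul, mul_neg, neg_mul,
      add_zero, zero_add, transpose_transpose]
    rw [← transpose_mul, hsym]
    exact neg_add_cancel _

lemma symp_triangular_mem {n : ℕ} (A B D : Matrix (Fin n) (Fin n) F)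
    (h : (Matrix.fromBlocks A B 0 D)ᵀ * Jmat F n * Matrix.fromBlocks A B 0 D = Jmat F n) :
    Matrix.fromBlocks A B 0 D ∈ SiegelP F n := by
  rw [Jmat, fromBlocks_transpose, fromBlocks_multiply, fromBlocks_multiply] at h
  simp only [transpose_zero, mul_zero, zero_mul, mul_one, one_mul, mul_neg, neg_mul,
    add_zero, zero_add] at h
  have h21 : Dᵀ * A = 1 := by
    have := congrArg Matrix.toBlocks₂₁ h
    simp only [Matrix.toBlocks_fromBlocks₂₁] at this
    exact neg_inj.mp this
  have h22 : Bᵀ * D = Dᵀ * B := by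
    have := congrArg Matrix.toBlocks₂₂ h
    simp only [Matrix.toBlocks_fromBlocks₂₂] at this
    linear_combination (norm := noncomm_ring) this
  have hA : IsUnit A := (Matrix.isUnit_iff_isUnit_det A).mpr (Matrix.isUnit_det_of_left_inverse h21)
  have hAinv : A⁻¹ = Dᵀ := Matrix.inv_eq_left_inv h21
  refine ⟨A, B, hA, ?_, ?_⟩
  · rw [hAinv, transpose_mul, transpose_transpose, h22]
  · rw [hAinv, transpose_transpose]

lemma inv_zero_block {n j : ℕ} (g : Matrix (Fin n) (Fin n) F) (hg : IsUnit g)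
    (hz : ∀ a b : Fin n, (a : ℕ) < j → j ≤ (b : ℕ) → g a b = 0) :
    ∀ a b : Fin n, (a : ℕ) < j → j ≤ (b : ℕ) → g⁻¹ a b = 0 := by
  haveI := hg.invertible
  have hbt : Matrix.BlockTriangular g (fun i : Fin n => if (i : ℕ) < j then (1 : ℕ) else 0) := by
    intro a b hab
    by_cases ha : (a : ℕ) < j
    · by_cases hb : (b : ℕ) < j
      · simp [ha, hb] at hab
      · exact hz a b ha (not_lt.mp hb)
    · simp [ha] at hab
  intro a b ha hb
  exact Matrix.blockTriangular_inv_of_blockTriangular hbt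
    (by rw [if_pos ha, if_neg (not_lt.mpr hb)]; exact Nat.zero_lt_one)

lemma Hset_eq (n j : ℕ) :
    Hset F n j = {m | ∃ g X : Matrix (Fin n) (Fin n) F,
      IsUnit g ∧ (g⁻¹ * X)ᵀ = g⁻¹ * X ∧
      (∀ a b : Fin n, (a : ℕ) < j → j ≤ (b : ℕ) → g a b = 0) ∧
      (∀ a b : Fin n, (a : ℕ) < j → (b : ℕ) < j → X a b = 0) ∧
      m = Matrix.fromBlocks g X 0 (g⁻¹)ᵀ} := by
  ext m
  constructor
  · rintro ⟨⟨p, hp, hm⟩, hmP⟩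
    obtain ⟨g, X, hg, hsym, rfl⟩ := hp
    obtain ⟨g', X', hg', hsym', hmeq⟩ := hmP
    rw [sigma_inv, conj_sigma] at hm
    have key := hmeq.symm.trans hm
    refine ⟨g', X', hg', hsym', ?_, ?_, hmeq⟩
    · intro a b ha hb
      have h := congrFun (congrFun key (Sum.inl a)) (Sum.inl b)
      simp only [fromBlocks_apply₁₁] at h
      rw [h]
      simp [dd1, dd3, Matrix.sub_apply, Matrix.add_apply, Matrix.diagonal_mul,
        Matrix.mul_diagonal, not_le.mpr ha, not_lt.mpr hb]
    · intro a b ha hb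
      have h := congrFun (congrFun key (Sum.inl a)) (Sum.inr b)
      simp only [fromBlocks_apply₁₂] at h
      rw [h]
      simp [dd1, dd3, Matrix.sub_apply, Matrix.add_apply, Matrix.diagonal_mul,
        Matrix.mul_diagonal, not_le.mpr ha, not_le.mpr hb]
  · rintro ⟨g, X, hg, hsym, hgz, hXz, rfl⟩
    have hmem : Matrix.fromBlocks g X 0 (g⁻¹)ᵀ ∈ SiegelP F n := ⟨g, X, hg, hsym, rfl⟩
    set m := Matrix.fromBlocks g X 0 (g⁻¹)ᵀ with hmdef
    set p := (sigmaM F n j)ᵀ * m * sigmaM F n j with hpdef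
    have hC : -(dd3 n j * g * dd1 n j) - dd3 n j * X * dd3 n j
        + dd1 n j * ((g⁻¹)ᵀ) * dd3 n j = 0 := by
      ext a b
      simp only [dd1, dd3, Matrix.sub_apply, Matrix.add_apply, Matrix.neg_apply,
        Matrix.diagonal_mul, Matrix.mul_diagonal, Matrix.zero_apply, Matrix.transpose_apply]
      by_cases ha : (a : ℕ) < j
      · by_cases hb : (b : ℕ) < j
        · simp [ha, hb, hXz a b ha hb, not_le.mpr ha, not_le.mpr hb]
        · simp [ha, hb, hgz a b ha (not_lt.mp hb), not_le.mpr ha]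
      · by_cases hb : (b : ℕ) < j
        · simp [ha, hb, inv_zero_block g hg hgz b a hb (not_lt.mp ha)]
        · simp [ha, hb]
    have hpform : p = Matrix.fromBlocks
        (dd1 n j * g * dd1 n j + dd1 n j * X * dd3 n j + dd3 n j * ((g⁻¹)ᵀ) * dd3 n j)
        (-(dd1 n j * g * dd3 n j) + dd1 n j * X * dd1 n j + dd3 n j * ((g⁻¹)ᵀ) * dd1 n j)
        0
        (dd3 n j * g * dd3 n j - dd3 n j * X * dd1 n j + dd1 n j * ((g⁻¹)ᵀ) * dd1 n j) := by
      rw [hpdef, hmdef, conj_sigmaT, hC]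
    have hp1 : pᵀ * Jmat F n * p = Jmat F n := by
      have e0 : pᵀ = (sigmaM F n j)ᵀ * mᵀ * sigmaM F n j := by
        simp [hpdef, transpose_mul, mul_assoc]
      rw [e0, hpdef]
      have e1 : (sigmaM F n j)ᵀ * mᵀ * sigmaM F n j * Jmat F n
            * ((sigmaM F n j)ᵀ * m * sigmaM F n j)
          = (sigmaM F n j)ᵀ * (mᵀ * (sigmaM F n j * Jmat F n * (sigmaM F n j)ᵀ) * m)
            * sigmaM F n j := by
        noncomm_ring
      rw [e1, sigma_J, siegel_symp hmem, sigmaT_J]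
    have hpmem : p ∈ SiegelP F n := by
      rw [hpform]
      exact symp_triangular_mem _ _ _ (by rw [← hpform]; exact hp1)
    refine ⟨⟨p, hpmem, ?_⟩, hmem⟩
    rw [sigma_inv, hpdef]
    have e2 : sigmaM F n j * ((sigmaM F n j)ᵀ * m * sigmaM F n j) * (sigmaM F n j)ᵀ
        = (sigmaM F n j * (sigmaM F n j)ᵀ) * m * (sigmaM F n j * (sigmaM F n j)ᵀ) := by
      noncomm_ring
    rw [e2, sigma_mul_transpose, one_mul, mul_one]

end Aux

/-- `H_0 = P`; for `1 ≤ j ≤ n-1`, `H_j` consists of the `[[g,X],[0,ᵗg⁻¹]] ∈ P`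
with the upper-right `j × (n-j)` block of `g` zero and the upper-left `j × j` block of `X`
zero; and `H_n = M`. -/


theorem Hset_description (h2 : (2 : F) ≠ 0) (n : ℕ) (hn : 1 ≤ n) :
    (Hset F n 0 = SiegelP F n) ∧
    (∀ j, 1 ≤ j → j ≤ n - 1 →
      Hset F n j = {m | ∃ g X : Matrix (Fin n) (Fin n) F,
        IsUnit g ∧ (g⁻¹ * X)ᵀ = g⁻¹ * X ∧
        (∀ a b : Fin n, (a : ℕ) < j → j ≤ (b : ℕ) → g a b = 0) ∧
        (∀ a b : Fin n, (a : ℕ) < j → (b : ℕ) < j → X a b = 0) ∧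
        m = Matrix.fromBlocks g X 0 (g⁻¹)ᵀ}) ∧
    (Hset F n n = Mlevi F n) := by
  refine ⟨?_, fun j _ _ => Hset_eq n j, ?_⟩
  · rw [Hset_eq]
    ext m
    simp only [Set.mem_setOf_eq, SiegelP]
    constructor
    · rintro ⟨g, X, hg, hs, -, -, rfl⟩
      exact ⟨g, X, hg, hs, rfl⟩
    · rintro ⟨g, X, hg, hs, rfl⟩
      exact ⟨g, X, hg, hs, fun a b ha _ => absurd ha (Nat.not_lt_zero _),
        fun a b ha _ => absurd ha (Nat.not_lt_zero _), rfl⟩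
  · rw [Hset_eq]
    ext m
    simp only [Set.mem_setOf_eq, Mlevi]
    constructor
    · rintro ⟨g, X, hg, hs, hgz, hXz, rfl⟩
      have hX0 : X = 0 := by ext a b; exact hXz a b a.isLt b.isLt
      exact ⟨g, hg, by rw [hX0]⟩
    · rintro ⟨g, hg, rfl⟩
      refine ⟨g, 0, hg, by simp, fun a b _ hb => absurd hb (not_le.mpr b.isLt),
        fun a b _ _ => rfl, rfl⟩
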